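/- arXiv:2504.00184 — 3 statements merged into one kernel-verified Lean document; each statement's English description precedes it below -/
import Mathlib

section
/- If w is a right special word in the Thue–Morse sequence, then the image of w under the Thue–Morse substitution is also right special. -/
/-- The Thue–Morse sequence: parity of the number of 1s in binary (fixed point of
`0 ↦ 01`, `1 ↦ 10` starting from `0`). -/
def tm (n : ℕ) : Fin 2 := Fin.ofNat 2 ((Nat.digits 2 n).count 1)

/-- A finite word occurs in the Thue–Morse sequence. -/
def OccursTM (w : List (Fin 2)) : Prop :=
  ∃ i : ℕ, ∀ j : Fin w.length, tm (i + j) = w.get j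

/-- `w` is right special in the Thue–Morse sequence. -/
def RightSpecialTM (w : List (Fin 2)) : Prop :=
  ∃ a b : Fin 2, a ≠ b ∧ OccursTM (w ++ [a]) ∧ OccursTM (w ++ [b])

/-- The Thue–Morse substitution `0 ↦ 01`, `1 ↦ 10`, extended to words. -/
def tmSubst (w : List (Fin 2)) : List (Fin 2) :=
  w.flatMap (fun x => if x = 0 then [0, 1] else [1, 0])

/-! Since `tm (2n) = tm n` and `tm (2n+1) = tm n + 1`, the substitution maps the factor of the
Thue–Morse sequence at position `i` to the factor at position `2i`. So if `w a` occurs, then so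
does `σ(w a) = σ(w) a (a + 1)`, and with it its prefix `σ(w) a`. -/

lemma tm_two_mul (n : ℕ) : tm (2 * n) = tm n := by
  rcases Nat.eq_zero_or_pos n with rfl | hn
  · rfl
  · simp [tm, Nat.digits_def' one_lt_two (Nat.mul_pos two_pos hn)]

lemma tm_two_mul_add_one (n : ℕ) : tm (2 * n + 1) = tm n + 1 := by
  have hmod : (2 * n + 1) % 2 = 1 := by omega
  have hdiv : (2 * n + 1) / 2 = n := by omega
  simp only [tm, Nat.digits_def' one_lt_two (Nat.succ_pos _), hmod, hdiv, List.count_cons_self]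
  ext
  simp [Fin.val_add]

lemma tmSubst_append (u v : List (Fin 2)) : tmSubst (u ++ v) = tmSubst u ++ tmSubst v := by
  simp [tmSubst]

lemma tmSubst_singleton (a : Fin 2) : tmSubst [a] = [a, a + 1] := by
  fin_cases a <;> rfl

def tmFactor (i n : ℕ) : List (Fin 2) :=
  (List.range n).map fun j => tm (i + j)

lemma occursTM_iff (w : List (Fin 2)) : OccursTM w ↔ ∃ i n, tmFactor i n = w := by
  constructor
  · rintro ⟨i, hi⟩
    refine ⟨i, w.length, List.ext_getElem (by simp [tmFactor]) fun j _ hj => ?_⟩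
    simpa [tmFactor] using hi ⟨j, hj⟩
  · rintro ⟨i, n, rfl⟩
    exact ⟨i, fun ⟨j, hj⟩ => by simp [tmFactor]⟩

lemma tmFactor_succ (i n : ℕ) : tmFactor i (n + 1) = tmFactor i n ++ [tm (i + n)] := by
  simp [tmFactor, List.range_succ]

lemma tmSubst_tmFactor (i n : ℕ) : tmSubst (tmFactor i n) = tmFactor (2 * i) (2 * n) := by
  induction n with
  | zero => rfl
  | succ n ih =>
    rw [tmFactor_succ, tmSubst_append, ih, tmSubst_singleton, Nat.mul_succ, tmFactor_succ,
      tmFactor_succ, ← add_assoc, ← mul_add, tm_two_mul, tm_two_mul_add_one]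
    simp

lemma take_tmFactor (i m n : ℕ) : (tmFactor i n).take m = tmFactor i (min m n) := by
  simp [tmFactor, ← List.map_take, List.take_range]

lemma occursTM_tmSubst {w : List (Fin 2)} (h : OccursTM w) : OccursTM (tmSubst w) := by
  obtain ⟨i, n, rfl⟩ := (occursTM_iff w).1 h
  exact (occursTM_iff _).2 ⟨2 * i, 2 * n, (tmSubst_tmFactor i n).symm⟩

lemma occursTM_of_isPrefix {u w : List (Fin 2)} (h : OccursTM w) (hu : u <+: w) : OccursTM u := by
  obtain ⟨i, n, rfl⟩ := (occursTM_iff w).1 h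
  rw [List.prefix_iff_eq_take.1 hu, take_tmFactor]
  exact (occursTM_iff _).2 ⟨i, _, rfl⟩

lemma occursTM_tmSubst_append_singleton {w : List (Fin 2)} {a : Fin 2}
    (h : OccursTM (w ++ [a])) : OccursTM (tmSubst w ++ [a]) :=
  occursTM_of_isPrefix (occursTM_tmSubst h)
    ⟨[a + 1], by simp [tmSubst_append, tmSubst_singleton]⟩

/-- The substitution image of a right special word of Thue–Morse is right special. -/
theorem tmSubst_rightSpecial (w : List (Fin 2)) (h : RightSpecialTM w) :
    RightSpecialTM (tmSubst w) := by
  obtain ⟨a, b, hab, ha, hb⟩ := h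
  exact ⟨a, b, hab, occursTM_tmSubst_append_singleton ha, occursTM_tmSubst_append_singleton hb⟩
end

section
/- For the gapped digit substitution with Q = 3 and D = {-1, 0, 4}, the central patch of the k-th level support D_k (k ≥ 1) is the interval of integers {-1, 0, 1, ..., 2·3^{k-1} − (3^k − 3)/2 − 2}. -/
/-- The support of the `k`-th level of the gapped digit substitution with
`Q = 3`, `D = {-1, 0, 4}`: `Dset 0 = {0}` and `Dset (k+1) = 3·(Dset k) + {-1,0,4}`. -/
def Dset : ℕ → Set ℤ
  | 0 => {0}
  | k + 1 => {n : ℤ | ∃ x ∈ Dset k, ∃ d ∈ ({-1, 0, 4} : Set ℤ), n = 3 * x + d}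

lemma odd_pow3 (k : ℕ) : ∃ s : ℤ, (3:ℤ)^k = 2*s + 1 := by
  have h : Odd ((3:ℤ)^k) := Odd.pow (by decide)
  obtain ⟨s, hs⟩ := h
  exact ⟨s, hs⟩

lemma aux_patch (k : ℕ) :
    (∀ n : ℤ, -1 ≤ n → 2*n + 1 ≤ 3^k → n ∈ Dset (k+1)) ∧
    (∀ n : ℤ, 2*n = 3^k + 1 → n ∉ Dset (k+1)) := by
  induction k with
  | zero =>
    constructor
    · intro n h1 h2
      have hn : n = -1 ∨ n = 0 := by omega
      rcases hn with rfl | rfl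
      · exact ⟨0, rfl, -1, by simp, by ring⟩
      · exact ⟨0, rfl, 0, by simp, by ring⟩
    · intro n hn hmem
      obtain ⟨x, hx, d, hd, heq⟩ := hmem
      have hx0 : x = 0 := hx
      simp only [Set.mem_insert_iff, Set.mem_singleton_iff] at hd
      simp only [pow_zero] at hn
      rcases hd with rfl | rfl | rfl <;> omega
  | succ k ih =>
    obtain ⟨ih1, ih2⟩ := ih
    obtain ⟨s, hs⟩ := odd_pow3 k
    have h3 : (3:ℤ)^(k+1) = 3 * 3^k := by ring
    constructor
    · intro n h1 h2
      rw [h3, hs] at h2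
      obtain ⟨q, r, hn, hr0, hr2⟩ : ∃ q r : ℤ, n = 3*q + r ∧ 0 ≤ r ∧ r < 3 :=
        ⟨n / 3, n % 3, by omega, by omega, by omega⟩
      have hr : r = 0 ∨ r = 1 ∨ r = 2 := by omega
      rcases hr with rfl | rfl | rfl
      · exact ⟨q, ih1 q (by omega) (by rw [hs]; omega), 0, by simp, by omega⟩
      · exact ⟨q - 1, ih1 (q-1) (by omega) (by rw [hs]; omega), 4, by simp, by omega⟩
      · exact ⟨q + 1, ih1 (q+1) (by omega) (by rw [hs]; omega), -1, by simp, by omega⟩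
    · intro n hn hmem
      rw [h3, hs] at hn
      obtain ⟨x, hx, d, hd, heq⟩ := hmem
      simp only [Set.mem_insert_iff, Set.mem_singleton_iff] at hd
      rcases hd with rfl | rfl | rfl
      · exact ih2 x (by rw [hs]; omega) hx
      · omega
      · omega

/-- Central Patch Lemma: for `k ≥ 1`, the central patch of `Dset k` is
`{-1, 0, ..., 2·3^(k-1) − (3^k − 3)/2 − 2}`, i.e. all these integers belong to
`Dset k` and the next one does not. -/
theorem central_patch (k : ℕ) (hk : 1 ≤ k) :
    (∀ n : ℤ, -1 ≤ n → n ≤ 2 * 3 ^ (k - 1) - (3 ^ k - 3) / 2 - 2 → n ∈ Dset k) ∧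
    (2 * 3 ^ (k - 1) - (3 ^ k - 3) / 2 - 1 : ℤ) ∉ Dset k := by
  obtain ⟨j, rfl⟩ : ∃ j, k = j + 1 := ⟨k - 1, by omega⟩
  obtain ⟨s, hs⟩ := odd_pow3 j
  have hdiv : ((3:ℤ)^(j+1) - 3) / 2 = 3 * s := by
    have h : (3:ℤ)^(j+1) - 3 = 2 * (3*s) := by rw [pow_succ, hs]; ring
    rw [h, Int.mul_ediv_cancel_left _ (by norm_num)]
  simp only [Nat.add_sub_cancel]
  rw [hdiv]
  obtain ⟨m1, m2⟩ := aux_patch j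
  constructor
  · intro n h1 h2
    rw [hs] at h2
    exact m1 n h1 (by rw [hs]; omega)
  · apply m2
    rw [hs]; omega
end

section
/- −2 does not belong to D_k for any k ≥ 1, where D_1 = {-1,0,4} and D_{k+1} = 3·D_k + D_1. -/
/-- `−2` belongs to no level `Dset k`, `k ≥ 1`. -/
theorem neg_two_not_mem_Dset (k : ℕ) (hk : 1 ≤ k) : (-2 : ℤ) ∉ Dset k := by
  induction k with
  | zero => omega
  | succ n ih =>
    rintro ⟨x, hx, d, hd, he⟩
    rcases hd with rfl | rfl | rfl
    · omega
    · omega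
    · have hx2 : x = -2 := by omega
      subst hx2
      rcases n with _ | m
      · simp [Dset] at hx
      · exact ih (by omega) hx
end
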